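/- Let k > 0. Define l_T(s) := (1/k)(1 − e^{−k(T−s)}) and n_T(s) := (1/(2k))(e^{−k(2T−s)} − 1) for s ∈ [0,T]. There exists a constant C, depending only on k, β, C_β, C'_β, such that for all T ≥ 1, |∥l_T∥²_H| ≤ C T^{2β} and |∥n_T∥²_H| ≤ C T^{2β}. -/

import Mathlib

/-!
On `(0, T]` both weights are bounded by `1 / k`, and off the diagonal
`|D t s| ≤ Cβ |t - s| ^ (2β - 2) + Cβ' t ^ (β - 1) s ^ (β - 1)`. Both terms of this majorant are
integrable singularities (`2β - 2 > -1`, `β - 1 > -1`), and their double integrals over `[0, T]²`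
are exactly `T ^ (2β) / ((2β - 1) β)` and `(T ^ β / β) ^ 2`, so the `H`-norms are at most
`k⁻² (Cβ / ((2β - 1) β) + Cβ' / β²) T ^ (2β)`. The iterated integrals are bounded one variable at a
time, the inner one after discarding the null diagonal `s = t`.
-/

open MeasureTheory intervalIntegral Set Real
open scoped Interval

theorem intervalIntegrable_abs_rpow {r : ℝ} (hr : -1 < r) (a b : ℝ) :
    IntervalIntegrable (fun x => |x| ^ r) volume a b := by
  have from_zero : ∀ c, IntervalIntegrable (fun x => |x| ^ r) volume 0 c := by
    intro c
    rcases le_total 0 c with hc | hc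
    · refine (intervalIntegrable_rpow' hr).congr fun x hx => ?_
      rw [uIoc_of_le hc] at hx
      simp only [abs_of_pos hx.1]
    · have h := (intervalIntegrable_rpow' hr (a := 0) (b := -c)).comp_sub_left 0
      simp only [sub_zero, zero_sub, neg_neg] at h
      refine h.congr fun x hx => ?_
      rw [uIoc_of_ge hc] at hx
      simp only [abs_of_nonpos hx.2]
  exact (from_zero a).symm.trans (from_zero b)

theorem intervalIntegrable_abs_sub_rpow {r : ℝ} (hr : -1 < r) (t a b : ℝ) :
    IntervalIntegrable (fun s => |t - s| ^ r) volume a b := by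
  simpa using (intervalIntegrable_abs_rpow hr (t - a) (t - b)).comp_sub_left t

theorem integral_abs_sub_rpow {r t T : ℝ} (hr : -1 < r) (ht₀ : 0 ≤ t) (htT : t ≤ T) :
    ∫ s in 0..T, |t - s| ^ r = (t ^ (r + 1) + (T - t) ^ (r + 1)) / (r + 1) := by
  have hr' : r + 1 ≠ 0 := by linarith
  have left : ∫ s in 0..t, |t - s| ^ r = t ^ (r + 1) / (r + 1) := by
    rw [integral_congr (g := fun s => (t - s) ^ r) fun s hs => ?_,
      integral_comp_sub_left (fun x => x ^ r), sub_self, sub_zero, integral_rpow (Or.inl hr),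
      zero_rpow hr', sub_zero]
    rw [uIcc_of_le ht₀] at hs
    simp only [abs_of_nonneg (sub_nonneg.2 hs.2)]
  have right : ∫ s in t..T, |t - s| ^ r = (T - t) ^ (r + 1) / (r + 1) := by
    rw [integral_congr (g := fun s => (s - t) ^ r) fun s hs => ?_,
      integral_comp_sub_right (fun x => x ^ r), sub_self, integral_rpow (Or.inl hr),
      zero_rpow hr', sub_zero]
    rw [uIcc_of_le htT] at hs
    simp only [abs_sub_comm t s, abs_of_nonneg (sub_nonneg.2 hs.1)]
  rw [← integral_add_adjacent_intervals (intervalIntegrable_abs_sub_rpow hr t 0 t)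
    (intervalIntegrable_abs_sub_rpow hr t t T), left, right, add_div]

theorem eqOn_integral_abs_sub_rpow {r T : ℝ} (hr : -1 < r) (hT : 0 ≤ T) :
    EqOn (fun t => ∫ s in 0..T, |t - s| ^ r)
      (fun t => (t ^ (r + 1) + (T - t) ^ (r + 1)) / (r + 1)) [[0, T]] := by
  intro t ht
  rw [uIcc_of_le hT] at ht
  exact integral_abs_sub_rpow hr ht.1 ht.2

theorem intervalIntegrable_integral_abs_sub_rpow {r T : ℝ} (hr : -1 < r) (hT : 0 ≤ T) :
    IntervalIntegrable (fun t => ∫ s in 0..T, |t - s| ^ r) volume 0 T := by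
  have hcont : Continuous fun t : ℝ => (t ^ (r + 1) + (T - t) ^ (r + 1)) / (r + 1) := by
    have := continuous_rpow_const (q := r + 1) (by linarith)
    fun_prop
  exact (hcont.intervalIntegrable 0 T).congr
    ((eqOn_integral_abs_sub_rpow hr hT).symm.mono uIoc_subset_uIcc)

theorem integral_integral_abs_sub_rpow {r T : ℝ} (hr : -1 < r) (hT : 0 ≤ T) :
    ∫ t in 0..T, ∫ s in 0..T, |t - s| ^ r = 2 * T ^ (r + 2) / ((r + 1) * (r + 2)) := by
  have hr₁ : -1 < r + 1 := by linarith
  have hr₂ : r + 1 + 1 ≠ 0 := by linarith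
  have reflected : IntervalIntegrable (fun t => (T - t) ^ (r + 1)) volume 0 T := by
    simpa using (intervalIntegrable_rpow' hr₁ (a := T) (b := 0)).comp_sub_left T
  rw [integral_congr (eqOn_integral_abs_sub_rpow hr hT), intervalIntegral.integral_div,
    integral_add (intervalIntegrable_rpow' hr₁) reflected,
    integral_comp_sub_left (fun x => x ^ (r + 1)), sub_self, sub_zero,
    integral_rpow (Or.inl hr₁), zero_rpow hr₂, sub_zero, show r + 1 + 1 = r + 2 by ring]
  field_simp
  ring

theorem abs_integral_integral_le {f g : ℝ → ℝ → ℝ} {a b : ℝ} (hab : a ≤ b)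
    (hfg : ∀ t ∈ Ioc a b, ∀ s ∈ Ioc a b, s ≠ t → |f t s| ≤ g t s)
    (hg : ∀ t, IntervalIntegrable (g t) volume a b)
    (hG : IntervalIntegrable (fun t => ∫ s in a..b, g t s) volume a b) :
    |∫ t in a..b, ∫ s in a..b, f t s| ≤ ∫ t in a..b, ∫ s in a..b, g t s := by
  rw [← Real.norm_eq_abs]
  refine norm_integral_le_of_norm_le hab (ae_of_all _ fun t ht => ?_) hG
  refine norm_integral_le_of_norm_le hab ?_ (hg t)
  filter_upwards [Measure.ae_ne volume t] with s hst hs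
  exact hfg t ht s hs hst

noncomputable def kernelMajorant (β c c' t s : ℝ) : ℝ :=
  c * |t - s| ^ (2 * β - 2) + c' * (t ^ (β - 1) * s ^ (β - 1))

section kernelMajorant

variable {β : ℝ} (hβ : 1 / 2 < β) (c c' : ℝ)
include hβ

theorem intervalIntegrable_kernelMajorant (t a b : ℝ) :
    IntervalIntegrable (kernelMajorant β c c' t) volume a b :=
  ((intervalIntegrable_abs_sub_rpow (by linarith) t a b).const_mul c).add
    (((intervalIntegrable_rpow' (by linarith)).const_mul _).const_mul c')

theorem integral_kernelMajorant (T t : ℝ) :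
    ∫ s in 0..T, kernelMajorant β c c' t s
      = c * (∫ s in 0..T, |t - s| ^ (2 * β - 2)) + c' * (T ^ β / β) * t ^ (β - 1) := by
  have hβ₁ : -1 < β - 1 := by linarith
  unfold kernelMajorant
  rw [integral_add ((intervalIntegrable_abs_sub_rpow (by linarith) t 0 T).const_mul c)
      (((intervalIntegrable_rpow' hβ₁).const_mul _).const_mul c'),
    intervalIntegral.integral_const_mul, intervalIntegral.integral_const_mul,
    intervalIntegral.integral_const_mul, integral_rpow (Or.inl hβ₁),
    zero_rpow (by linarith), sub_zero, sub_add_cancel]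
  ring

theorem intervalIntegrable_integral_kernelMajorant {T : ℝ} (hT : 0 ≤ T) :
    IntervalIntegrable (fun t => ∫ s in 0..T, kernelMajorant β c c' t s) volume 0 T := by
  simp only [integral_kernelMajorant hβ]
  exact ((intervalIntegrable_integral_abs_sub_rpow (by linarith) hT).const_mul c).add
    ((intervalIntegrable_rpow' (by linarith)).const_mul _)

theorem integral_integral_kernelMajorant {T : ℝ} (hT : 0 ≤ T) :
    ∫ t in 0..T, ∫ s in 0..T, kernelMajorant β c c' t s
      = (c / ((2 * β - 1) * β) + c' / β ^ 2) * T ^ (2 * β) := by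
  have hβ₁ : -1 < β - 1 := by linarith
  simp only [integral_kernelMajorant hβ]
  rw [integral_add ((intervalIntegrable_integral_abs_sub_rpow (by linarith) hT).const_mul c)
      ((intervalIntegrable_rpow' hβ₁).const_mul _),
    intervalIntegral.integral_const_mul, intervalIntegral.integral_const_mul,
    integral_integral_abs_sub_rpow (by linarith) hT, integral_rpow (Or.inl hβ₁),
    zero_rpow (by linarith), sub_zero]
  have hsq : T ^ β * T ^ β = T ^ (2 * β) := by
    rw [← rpow_add' hT (by linarith), two_mul]
  simp only [sub_add_cancel, show 2 * β - 2 + 1 = 2 * β - 1 by ring, ← hsq]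
  field_simp

end kernelMajorant

theorem abs_le_kernelMajorant {β c c' : ℝ} {D : ℝ → ℝ → ℝ} (hc : 0 ≤ c)
    {t s : ℝ} (ht : 0 < t) (hs : 0 < s)
    (hD : |D t s - c * |t - s| ^ (2 * β - 2)| ≤ c' * (t * s) ^ (β - 1)) :
    |D t s| ≤ kernelMajorant β c c' t s := by
  have hsing : 0 ≤ c * |t - s| ^ (2 * β - 2) := by positivity
  rw [kernelMajorant, ← mul_rpow ht.le hs.le]
  linarith [abs_sub_abs_le_abs_sub (D t s) (c * |t - s| ^ (2 * β - 2)), abs_of_nonneg hsing]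

theorem abs_integral_integral_mul_le {β c c' T M : ℝ} (hβ : 1 / 2 < β) (hc : 0 ≤ c)
    {D : ℝ → ℝ → ℝ}
    (hD : ∀ t s : ℝ, 0 < t → 0 < s → t ≠ s →
      |D t s - c * |t - s| ^ (2 * β - 2)| ≤ c' * (t * s) ^ (β - 1))
    (hT : 0 ≤ T) {w : ℝ → ℝ} (hw : ∀ s ∈ Ioc 0 T, |w s| ≤ M) :
    |∫ t in 0..T, ∫ s in 0..T, w t * w s * D t s|
      ≤ M ^ 2 * ((c / ((2 * β - 1) * β) + c' / β ^ 2) * T ^ (2 * β)) := by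
  have hbound : ∀ t ∈ Ioc 0 T, ∀ s ∈ Ioc 0 T, s ≠ t →
      |w t * w s * D t s| ≤ M ^ 2 * kernelMajorant β c c' t s := by
    intro t ht s hs hst
    have hM : 0 ≤ M := (abs_nonneg _).trans (hw t ht)
    rw [abs_mul, abs_mul, sq]
    gcongr
    · exact hw t ht
    · exact hw s hs
    · exact abs_le_kernelMajorant hc ht.1 hs.1 (hD t s ht.1 hs.1 hst.symm)
  calc |∫ t in 0..T, ∫ s in 0..T, w t * w s * D t s|
      ≤ ∫ t in 0..T, ∫ s in 0..T, M ^ 2 * kernelMajorant β c c' t s :=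
        abs_integral_integral_le hT hbound
          (fun t => (intervalIntegrable_kernelMajorant hβ c c' t 0 T).const_mul _)
          (by simpa only [intervalIntegral.integral_const_mul] using
            (intervalIntegrable_integral_kernelMajorant hβ c c' hT).const_mul (M ^ 2))
    _ = M ^ 2 * ((c / ((2 * β - 1) * β) + c' / β ^ 2) * T ^ (2 * β)) := by
        simp only [intervalIntegral.integral_const_mul, integral_integral_kernelMajorant hβ c c' hT]

theorem abs_one_sub_exp_neg_le_one {x : ℝ} (hx : 0 ≤ x) : |1 - exp (-x)| ≤ 1 := by
  have hexp : exp (-x) ≤ 1 := exp_le_one_iff.2 (by linarith)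
  rw [abs_of_nonneg (by linarith)]
  linarith [exp_pos (-x)]

theorem lT_nT_norm_H_bound_general
    (β : ℝ) (hβ : β ∈ Set.Ioo (1/2 : ℝ) 1)
    (Cβ Cβ' : ℝ) (hCβ : 0 < Cβ)
    (D : ℝ → ℝ → ℝ)
    (hDbound : ∀ t s : ℝ, 0 < t → 0 < s → t ≠ s →
      |D t s - Cβ * |t - s| ^ (2 * β - 2)| ≤ Cβ' * (t * s) ^ (β - 1))
    (k : ℝ) (hk : 0 < k) :
    ∃ C : ℝ, ∀ T : ℝ, 1 ≤ T →
      (|∫ r₁ in (0:ℝ)..T, ∫ r₂ in (0:ℝ)..T,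
          ((1/k) * (1 - Real.exp (-k * (T - r₁)))) * ((1/k) * (1 - Real.exp (-k * (T - r₂))))
            * D r₁ r₂| ≤ C * T ^ (2 * β))
      ∧ (|∫ r₁ in (0:ℝ)..T, ∫ r₂ in (0:ℝ)..T,
          ((1/(2*k)) * (Real.exp (-k * (2*T - r₁)) - 1)) * ((1/(2*k)) * (Real.exp (-k * (2*T - r₂)) - 1))
            * D r₁ r₂| ≤ C * T ^ (2 * β)) := by
  refine ⟨(1 / k) ^ 2 * (Cβ / ((2 * β - 1) * β) + Cβ' / β ^ 2), fun T hT => ?_⟩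
  have hT₀ : 0 ≤ T := by linarith
  rw [mul_assoc]
  constructor
  · refine abs_integral_integral_mul_le hβ.1 hCβ.le hDbound hT₀ fun s hs => ?_
    rw [abs_mul, abs_of_pos (by positivity : 0 < 1 / k), neg_mul]
    exact mul_le_of_le_one_right (by positivity)
      (abs_one_sub_exp_neg_le_one (mul_nonneg hk.le (by linarith [hs.2])))
  · refine abs_integral_integral_mul_le hβ.1 hCβ.le hDbound hT₀ fun s hs => ?_
    rw [abs_mul, abs_of_pos (by positivity : 0 < 1 / (2 * k)), abs_sub_comm, neg_mul]
    calc 1 / (2 * k) * |1 - exp (-(k * (2 * T - s)))| ≤ 1 / (2 * k) :=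
          mul_le_of_le_one_right (by positivity)
            (abs_one_sub_exp_neg_le_one (mul_nonneg hk.le (by linarith [hs.2])))
      _ ≤ 1 / k := by gcongr; linarith

/-- Bound (4.10): `|‖l_T‖²_H| ≤ C T^{2β}` and `|‖n_T‖²_H| ≤ C T^{2β}` for all `T ≥ 1`,
where `l_T(s) = (1/k)(1 − e^{−k(T−s)})` and `n_T(s) = (1/(2k))(e^{−k(2T−s)} − 1)`. -/
theorem lT_nT_norm_H_bound
    (β : ℝ) (hβ : β ∈ Set.Ioo (1/2 : ℝ) 1)
    (Cβ Cβ' : ℝ) (hCβ : 0 < Cβ) (hCβ' : 0 ≤ Cβ')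
    (D : ℝ → ℝ → ℝ) (hD : Measurable (Function.uncurry D))
    (hDbound : ∀ t s : ℝ, 0 < t → 0 < s → t ≠ s →
      |D t s - Cβ * |t - s| ^ (2 * β - 2)| ≤ Cβ' * (t * s) ^ (β - 1))
    (k : ℝ) (hk : 0 < k) :
    ∃ C : ℝ, ∀ T : ℝ, 1 ≤ T →
      (|∫ r₁ in (0:ℝ)..T, ∫ r₂ in (0:ℝ)..T,
          ((1/k) * (1 - Real.exp (-k * (T - r₁)))) * ((1/k) * (1 - Real.exp (-k * (T - r₂))))
            * D r₁ r₂| ≤ C * T ^ (2 * β))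
      ∧ (|∫ r₁ in (0:ℝ)..T, ∫ r₂ in (0:ℝ)..T,
          ((1/(2*k)) * (Real.exp (-k * (2*T - r₁)) - 1)) * ((1/(2*k)) * (Real.exp (-k * (2*T - r₂)) - 1))
            * D r₁ r₂| ≤ C * T ^ (2 * β)) :=
  lT_nT_norm_H_bound_general β hβ Cβ Cβ' hCβ D hDbound k hk
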